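/- Let g be a nonzero element of the completed symmetric coalgebra C_𝔪 = S(V)⊗̂𝔪 ⊕ k·1 satisfying Δg = ((I+τ)/2)(g⊗g), where τ is the signed flip. If g = g₊ + g₋ is the decomposition into even and odd components, then Δ(g₊) = g₊⊗g₊ and Δ(g₋) = g₋⊗g₊ + g₊⊗g₋. -/

import Mathlib

open scoped TensorProduct

noncomputable section

/-- The signed flip `τ(v⊗w) = (−1)^{|v||w|} w⊗v` on `C ⊗ C`, expressed through the
parity involution `σ` of `C`. -/
def tauC {k C : Type} [Field k] [Ring C] [Algebra k C] (σ : C →ₗ[k] C) :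
    C ⊗[k] C →ₗ[k] C ⊗[k] C :=
  let S : C ⊗[k] C →ₗ[k] C ⊗[k] C := (TensorProduct.comm k C C).toLinearMap
  (2 : k)⁻¹ • (S
    + (TensorProduct.map σ LinearMap.id).comp S
    + (TensorProduct.map LinearMap.id σ).comp S
    - (TensorProduct.map σ σ).comp S)

/-!
Write `T = σ ⊗ σ`. Expanding `(g ⊗ g + τ(g ⊗ g))/2` with `g = g₊ + g₋` gives
`Δg = g₊ ⊗ g₊ + (g₋ ⊗ g₊ + g₊ ⊗ g₋)`, whose two summands are `T`-even and `T`-odd.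
Since `Δ` commutes with the parity, `Δg₊` is `T`-even and `Δg₋` is `T`-odd, and `Δg = Δg₊ + Δg₋`.
In a torsion-free group the even/odd decomposition is unique, so the summands match.
-/

theorem eq_and_eq_of_add_eq_add_of_even_of_odd {M F : Type*} [AddCommGroup M]
    [IsAddTorsionFree M] [FunLike F M M] [AddMonoidHomClass F M M] (T : F) {a a' b b' : M}
    (ha : T a = a) (ha' : T a' = a') (hb : T b = -b) (hb' : T b' = -b')
    (h : a + b = a' + b') : a = a' ∧ b = b' := by
  have hd : a - a' = b' - b := by rw [sub_eq_sub_iff_add_eq_add, h, add_comm]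
  have hd_odd : T (a - a') = -(a - a') := by rw [hd, map_sub, hb, hb', neg_sub_neg, neg_sub]
  have hd_even : T (a - a') = a - a' := by rw [map_sub, ha, ha']
  have hd_zero : a - a' = 0 := neg_eq_self.mp (hd_odd.symm.trans hd_even)
  exact ⟨sub_eq_zero.mp hd_zero, (sub_eq_zero.mp (hd ▸ hd_zero)).symm⟩

section SignedFlip

variable {k C : Type} [Field k] [Ring C] [Algebra k C] (σ : C →ₗ[k] C)

theorem tauC_tmul (x y : C) :
    tauC σ (x ⊗ₜ y) = (2 : k)⁻¹ • (y ⊗ₜ x + σ y ⊗ₜ x + y ⊗ₜ σ x - σ y ⊗ₜ σ x) := by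
  simp [tauC]

theorem inv_two_smul_tmul_self_add_tauC [NeZero (2 : k)] {p m : C} (hp : σ p = p)
    (hm : σ m = -m) :
    (2 : k)⁻¹ • ((p + m) ⊗ₜ (p + m) + tauC σ ((p + m) ⊗ₜ (p + m)))
      = p ⊗ₜ p + (m ⊗ₜ p + p ⊗ₜ m) := by
  rw [tauC_tmul, map_add, hp, hm]
  simp only [TensorProduct.add_tmul, TensorProduct.tmul_add, TensorProduct.neg_tmul,
    TensorProduct.tmul_neg]
  match_scalars <;> field_simp <;> ring

end SignedFlip

theorem superGrouplike_even_odd_components_general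
    (k C : Type) [Field k] [CharZero k] [Ring C] [Algebra k C]
    (σ : C →ₗ[k] C)
    (Δ : C →ₗ[k] C ⊗[k] C)
    -- Δ commutes with the parity involution (it is a graded map) :
    (hΔσ : ∀ x : C, Δ (σ x) = TensorProduct.map σ σ (Δ x))
    (g : C)
    (hsg : Δ g = (2 : k)⁻¹ • (g ⊗ₜ g + tauC σ (g ⊗ₜ g)))
    (gp gm : C)
    (hgp : σ gp = gp)           -- even component
    (hgm : σ gm = - gm)         -- odd component
    (hdec : g = gp + gm) :
    Δ gp = gp ⊗ₜ gp ∧ Δ gm = gm ⊗ₜ gp + gp ⊗ₜ gm := by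
  have := IsAddTorsionFree.of_isTorsionFree k (C ⊗[k] C)
  have hΔg : Δ gp + Δ gm = gp ⊗ₜ gp + (gm ⊗ₜ gp + gp ⊗ₜ gm) := by
    rw [← map_add, ← hdec, hsg, hdec, inv_two_smul_tmul_self_add_tauC σ hgp hgm]
  refine eq_and_eq_of_add_eq_add_of_even_of_odd (TensorProduct.map σ σ) ?_ ?_ ?_ ?_ hΔg
  · rw [← hΔσ, hgp]
  · rw [TensorProduct.map_tmul, hgp]
  · rw [← hΔσ, hgm, map_neg]
  · rw [map_add, TensorProduct.map_tmul, TensorProduct.map_tmul, hgp, hgm,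
      TensorProduct.neg_tmul, TensorProduct.tmul_neg, neg_add]

/-- If `g` is a nonzero super-grouplike element of the completed symmetric
coalgebra `C_𝔪 = S(V)⊗̂𝔪 ⊕ k·1`, i.e. `Δg = ((I+τ)/2)(g⊗g)`, and `g = g₊ + g₋`
is its decomposition into even and odd components (w.r.t. the parity involution
`σ`), then `Δ(g₊) = g₊⊗g₊` and `Δ(g₋) = g₋⊗g₊ + g₊⊗g₋`. -/
theorem superGrouplike_even_odd_components
    (k C : Type) [Field k] [CharZero k] [Ring C] [Algebra k C]
    (σ : C →ₗ[k] C) (hσ : ∀ x, σ (σ x) = x)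
    (Δ : C →ₗ[k] C ⊗[k] C)
    -- Δ commutes with the parity involution (it is a graded map) :
    (hΔσ : ∀ x : C, Δ (σ x) = TensorProduct.map σ σ (Δ x))
    (g : C) (hg0 : g ≠ 0)
    (hsg : Δ g = (2 : k)⁻¹ • (g ⊗ₜ g + tauC σ (g ⊗ₜ g)))
    (gp gm : C)
    (hgp : σ gp = gp)           -- even component
    (hgm : σ gm = - gm)         -- odd component
    (hdec : g = gp + gm) :
    Δ gp = gp ⊗ₜ gp ∧ Δ gm = gm ⊗ₜ gp + gp ⊗ₜ gm :=
  superGrouplike_even_odd_components_general k C σ Δ hΔσ g hsg gp gm hgp hgm hdec
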